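/- arXiv:1710.02606 — 3 statements merged into one kernel-verified Lean document; each statement's English description precedes it below -/
import Mathlib

section
/- Let V = ⊕_{k=1}^r V_{d_k} be a representation of SL(2,ℂ) with all d_k ≥ 1, and assume V is not isomorphic to V₁, 2V₁, or V₂. Then lim_{b_Θ → a_Θ} Σ_{(K,I)∈Λ} 2 b_{K,I}^{D−3} / ∏_{(k,i)∈Θ∖{(K,I)}} (b_{K,I} − b_{k,i}) = 0, where the limit is taken over real tuples b_Θ = (b_{k,i} : (k,i)∈Θ) with pairwise distinct entries tending to a_Θ = (a_{k,i} : (k,i)∈Θ). -/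
open scoped BigOperators

noncomputable section

/-- The weight `a_{k,i} = 2 i - d k` attached to `(k,i) ∈ Θ`. -/
def aVal (r : ℕ) (d : Fin r → ℕ) (p : Σ k : Fin r, Fin (d k + 1)) : ℤ :=
  2 * ((p.2 : ℕ) : ℤ) - (d p.1 : ℤ)

/-- The index set `Λ ⊆ Θ` of positive weights. -/
abbrev lamType (r : ℕ) (d : Fin r → ℕ) : Type :=
  {p : Σ k : Fin r, Fin (d k + 1) // 0 < aVal r d p}

/-- `C = |Λ|`. -/
def cardC (r : ℕ) (d : Fin r → ℕ) : ℕ := Fintype.card (lamType r d)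

/-- The tuple `a = (a_{k,i} : (k,i) ∈ Λ)`. -/
def aTuple (r : ℕ) (d : Fin r → ℕ) (q : lamType r d) : ℝ := ((aVal r d q.1 : ℤ) : ℝ)

/-!
Up to the factor `2`, the `(K,I)`-th summand is the residue at `b_{K,I}` of
`z ^ m / ∏_{(k,i) ∈ Θ} (z - b_{k,i})`, `m = D - 3`. For `b` near `a`, the residues at the poles
clustering at the positive weights sum to `(2πi)⁻¹` times the integral over a circle enclosing
exactly those poles, which depends continuously on `b`; so the sum over `Λ` has a limit `L`.
The same argument around `0` gives limit `0` for the poles clustering at the weight `0`: at most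
`r` weights vanish, and `r ≤ m` because `∑ d_k ≥ 3` (this is where `V₁`, `2V₁`, `V₂` are
excluded), so the integrand is holomorphic inside that circle. The residues over all of `Θ` sum
to zero (Lagrange interpolation of `z ^ m`, as `m ≤ D - 2`), and `b ↦ -b ∘ σ`,
`σ (k,i) = (k, d_k - i)`, carries the summands over positive weights to those over negative
weights (`m + D` is odd), so `L = -L - 0`.
-/

open Finset Filter Metric Complex Topology Function Real

section ResidueSum

variable {ι : Type*} [Fintype ι] [DecidableEq ι] {K : Type*} [Field K]

/-- The sum of the residues of `z ^ m / ∏ q, (z - v q)` at the poles `v p`, `p ∈ s`. -/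
def residueSum (s : Finset ι) (m : ℕ) (v : ι → K) : K :=
  ∑ p ∈ s, v p ^ m / ∏ q ∈ univ.erase p, (v p - v q)

theorem map_residueSum {L : Type*} [Field L] (f : K →+* L) (s : Finset ι) (m : ℕ) (v : ι → K) :
    f (residueSum s m v) = residueSum s m (fun p => f (v p)) := by
  simp [residueSum, map_sum, map_div₀, map_prod]

theorem residueSum_univ_eq_zero {v : ι → K} (hv : Injective v) {m : ℕ}
    (hm : m + 2 ≤ Fintype.card ι) : residueSum univ m v = 0 := by
  have h := Lagrange.coeff_eq_sum (s := univ) hv.injOn (P := Polynomial.X ^ m)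
    (by rw [Polynomial.degree_X_pow, card_univ]; exact_mod_cast (by omega : m < Fintype.card ι))
  rw [Polynomial.coeff_X_pow, if_neg (by rw [card_univ]; omega)] at h
  simpa [residueSum] using h.symm

theorem residueSum_neg_comp (σ : ι ≃ ι) {s t : Finset ι} (hst : ∀ p, p ∈ s ↔ σ p ∈ t) (m : ℕ)
    (v : ι → K) :
    residueSum s m (fun p => -v (σ p)) = (-1) ^ (m + Fintype.card ι + 1) * residueSum t m v := by
  rw [residueSum, residueSum, mul_sum]
  refine sum_equiv σ hst fun p _ => ?_
  have hprod : ∏ q ∈ univ.erase p, (v (σ p) - v (σ q)) = ∏ q ∈ univ.erase (σ p), (v (σ p) - v q) :=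
    prod_equiv σ (by simp [σ.injective.eq_iff]) fun _ _ => rfl
  have hcard : Fintype.card ι = #(univ.erase p) + 1 := (card_erase_add_one (mem_univ p)).symm
  simp_rw [neg_sub_neg, ← neg_sub (v (σ p)), prod_neg, hprod, neg_pow (v (σ p)), hcard]
  generalize #(univ.erase p) = k
  have hk : ((-1 : K) ^ k)⁻¹ = (-1) ^ k := by rw [← inv_pow, inv_neg_one]
  rw [mul_div_assoc, div_mul_eq_div_div_swap, div_eq_mul_inv _ ((-1) ^ k), hk]
  ring

theorem residueSum_pos_add_residueSum_zero_add_residueSum_neg (w : ι → ℤ) (m : ℕ) (v : ι → K) :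
    residueSum {p | 0 < w p} m v + residueSum {p | w p = 0} m v + residueSum {p | w p < 0} m v =
      residueSum univ m v := by
  simp only [residueSum, sum_filter, ← sum_add_distrib]
  refine sum_congr rfl fun p _ => ?_
  split_ifs <;> first | omega | simp

theorem residueSum_pos_neg_comp (w : ι → ℤ) (σ : ι ≃ ι) (hσ : ∀ p, w (σ p) = -w p) {m : ℕ}
    (hm : m + 2 ≤ Fintype.card ι) (hpar : Odd (m + Fintype.card ι)) {v : ι → K}
    (hv : Injective v) :
    residueSum {p | 0 < w p} m (fun p => -v (σ p)) =
      -residueSum {p | 0 < w p} m v - residueSum {p | w p = 0} m v := by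
  rw [residueSum_neg_comp σ (t := {p | w p < 0}) (fun p => by simp [hσ]) m v,
    hpar.add_one.neg_one_pow, one_mul]
  linear_combination (residueSum_pos_add_residueSum_zero_add_residueSum_neg w m v).trans
    (residueSum_univ_eq_zero hv hm)

theorem pow_div_prod_sub_eq_sum {v : ι → K} (hv : Injective v) {m : ℕ}
    (hm : m + 1 ≤ Fintype.card ι) {x : K} (hx : ∀ p, x ≠ v p) :
    x ^ m / ∏ q, (x - v q) = ∑ p, (v p ^ m / ∏ q ∈ univ.erase p, (v p - v q)) * (x - v p)⁻¹ := by
  have h := Lagrange.eval_interpolate_not_at_node (s := univ) (v := v) (fun p => v p ^ m)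
    (x := x) (fun p _ => hx p)
  rw [← Lagrange.eq_interpolate_of_eval_eq (f := Polynomial.X ^ m) _ hv.injOn
    (by rw [Polynomial.degree_X_pow, card_univ]; exact_mod_cast (by omega : m < Fintype.card ι))
    (fun p _ => by simp), Polynomial.eval_pow, Polynomial.eval_X, Lagrange.eval_nodal] at h
  rw [h, mul_div_cancel_left₀ _ (prod_ne_zero_iff.2 fun p _ => sub_ne_zero.2 (hx p))]
  simp [Lagrange.nodalWeight, div_eq_mul_inv, prod_inv_distrib, mul_comm, mul_left_comm]

end ResidueSum

theorem circleIntegral.integral_sub_inv_of_notMem_closedBall {c w : ℂ} {R : ℝ} (hR : 0 ≤ R)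
    (hw : w ∉ closedBall c R) : (∮ z in C(c, R), (z - w)⁻¹) = 0 := by
  refine DiffContOnCl.circleIntegral_eq_zero hR
    (DifferentiableOn.diffContOnCl_ball (U := closedBall c R) (fun z hz => ?_) subset_rfl)
  exact ((differentiableAt_id.sub_const w).inv
    (sub_ne_zero.2 fun h => hw (h ▸ hz))).differentiableWithinAt

theorem eventually_mem_ball_iff_and_notMem_sphere {c w : ℂ} {R : ℝ} (hw : w ∉ sphere c R) :
    ∀ᶠ z in 𝓝 w, (z ∈ ball c R ↔ w ∈ ball c R) ∧ z ∉ sphere c R := by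
  have hdist : Tendsto (dist · c) (𝓝 w) (𝓝 (dist w c)) := tendsto_id.dist tendsto_const_nhds
  simp only [mem_ball, mem_sphere] at hw ⊢
  rcases lt_or_gt_of_ne hw with h | h
  · filter_upwards [hdist.eventually_lt_const h] with z hz using ⟨iff_of_true hz h, hz.ne⟩
  · filter_upwards [hdist.eventually_const_lt h] with z hz
      using ⟨iff_of_false hz.not_gt h.not_gt, hz.ne'⟩

theorem Complex.intCast_mem_ball_iff (x c n : ℤ) :
    (x : ℂ) ∈ ball (c : ℂ) (n + 2⁻¹) ↔ |x - c| ≤ n := by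
  rw [mem_ball, Complex.dist_eq, ← Int.cast_sub, Complex.norm_intCast, ← Int.cast_abs]
  generalize |x - c| = k
  constructor
  · intro h
    have : (k : ℝ) < (n + 1 : ℤ) := by push_cast; linarith
    exact Int.lt_add_one_iff.1 (Int.cast_lt.1 this)
  · intro h
    have : (k : ℝ) ≤ n := Int.cast_le.2 h
    linarith

theorem Complex.intCast_notMem_sphere (x c n : ℤ) : (x : ℂ) ∉ sphere (c : ℂ) (n + 2⁻¹) := by
  rw [mem_sphere, Complex.dist_eq, ← Int.cast_sub, Complex.norm_intCast, ← Int.cast_abs]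
  generalize |x - c| = k
  intro h
  have : ((2 * k : ℤ) : ℝ) = (2 * n + 1 : ℤ) := by push_cast; linarith
  have := Int.cast_injective this
  omega

theorem nhdsWithin_setOf_injective_neBot {𝕜 : Type*} [NontriviallyNormedField 𝕜] [CharZero 𝕜]
    {ι : Type*} [Fintype ι] (a : ι → 𝕜) : (𝓝[{v | Injective v}] a).NeBot := by
  set e : ι → 𝕜 := fun p => (Fintype.equivFin ι p : ℕ)
  have he : Injective e := fun p q h =>
    (Fintype.equivFin ι).injective (Fin.ext (Nat.cast_injective h))
  have hbad : {t : 𝕜 | ¬Injective (a + t • e)}.Finite := by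
    refine (Set.finite_range fun pq : ι × ι => (a pq.2 - a pq.1) / (e pq.1 - e pq.2)).subset ?_
    intro t ht
    obtain ⟨p, q, hpq, hne⟩ : ∃ p q, a p + t * e p = a q + t * e q ∧ p ≠ q := by
      simpa [Injective] using ht
    refine ⟨(p, q), ?_⟩
    rw [div_eq_iff (sub_ne_zero.2 (he.ne hne))]
    linear_combination -hpq
  have hline : Tendsto (fun t : 𝕜 => a + t • e) (𝓝[≠] 0) (𝓝[{v | Injective v}] a) := by
    refine tendsto_nhdsWithin_iff.2 ⟨?_, ?_⟩
    · exact ((continuous_const.add (continuous_id.smul continuous_const)).tendsto' 0 a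
        (by simp)).mono_left nhdsWithin_le_nhds
    · filter_upwards [nhdsNE_le_cofinite 0 hbad.eventually_cofinite_notMem] with t ht
      simpa using ht
  exact hline.neBot

theorem tendsto_neg_comp_nhdsWithin_injective {ι G : Type*} [TopologicalSpace G] [AddGroup G]
    [ContinuousNeg G] (σ : ι ≃ ι) {A : ι → G} (hA : ∀ p, A (σ p) = -A p) :
    Tendsto (fun v p => -v (σ p)) (𝓝[{v | Injective v}] A) (𝓝[{v | Injective v}] A) := by
  have hmaps : Set.MapsTo (fun (v : ι → G) p => -v (σ p)) {v | Injective v} {v | Injective v} :=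
    fun v hv p q h => σ.injective (hv (neg_injective h))
  have h := (continuous_pi fun p => (continuous_apply (σ p)).neg).continuousWithinAt
    (x := A) |>.tendsto_nhdsWithin hmaps
  simpa [hA] using h

section CircleIntegral

variable {ι : Type*} [Fintype ι]

theorem continuousAt_circleIntegral_pow_div_prod_sub {A : ι → ℂ} (m : ℕ) {c : ℂ} {R : ℝ}
    (hR : 0 ≤ R) (hA : ∀ p, A p ∉ sphere c R) :
    ContinuousAt (fun v : ι → ℂ => ∮ z in C(c, R), z ^ m / ∏ q, (z - v q)) A := by
  set U : Set (ι → ℂ) := Set.univ.pi fun _ => (sphere c R)ᶜ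
  have hU : IsOpen U := isOpen_set_pi Set.finite_univ fun _ _ => isClosed_sphere.isOpen_compl
  refine ContinuousOn.continuousAt ?_ (hU.mem_nhds fun p _ => hA p)
  rw [continuousOn_iff_continuous_domRestrict]
  refine intervalIntegral.continuous_parametric_intervalIntegral_of_continuous'
    (f := fun (v : U) θ => deriv (circleMap c R) θ • (circleMap c R θ ^ m /
      ∏ q, (circleMap c R θ - (v : ι → ℂ) q))) ?_ _ _
  simp only [deriv_circleMap, uncurry_def]
  have hne : ∀ x : U × ℝ, ∏ q, (circleMap c R x.2 - (x.1 : ι → ℂ) q) ≠ 0 :=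
    fun ⟨⟨v, hv⟩, θ⟩ => prod_ne_zero_iff.2 fun q _ h => hv q (Set.mem_univ q)
      ((sub_eq_zero.1 h : circleMap c R θ = v q) ▸ circleMap_mem_sphere c hR θ)
  exact .fun_smul (by fun_prop)
    (.div₀ (by fun_prop) (continuous_finsetProd _ fun q _ => ((continuous_circleMap c R).comp
      continuous_snd).sub ((continuous_apply q).comp (continuous_subtype_val.comp continuous_fst)))
      hne)

theorem circleIntegral_pow_div_prod_sub_eq_zero {A : ι → ℂ} {m : ℕ} {ρ : ℝ} (hρ : 0 < ρ)
    (hzero : #{q | A q = 0} ≤ m) (hfar : ∀ q, A q ≠ 0 → A q ∉ closedBall 0 ρ) :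
    (∮ z in C(0, ρ), z ^ m / ∏ q, (z - A q)) = 0 := by
  set g : ℂ → ℂ := fun z => z ^ (m - #{q | A q = 0}) / ∏ q ∈ {q | A q ≠ 0}, (z - A q)
  have hg : ∀ z ≠ 0, z ^ m / ∏ q, (z - A q) = g z := by
    intro z hz
    rw [← prod_filter_mul_prod_filter_not univ (A · = 0), prod_congr rfl fun q hq => by
      rw [(mem_filter.1 hq).2, sub_zero], prod_const, ← Nat.add_sub_cancel' hzero, pow_add,
      mul_div_mul_left _ _ (pow_ne_zero _ hz)]
  rw [circleIntegral.integral_congr hρ.le fun z hz => hg z (ne_zero_of_mem_sphere hρ.ne' ⟨z, hz⟩)]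
  refine DiffContOnCl.circleIntegral_eq_zero hρ.le
    (DifferentiableOn.diffContOnCl_ball (U := closedBall 0 ρ) ?_ subset_rfl)
  refine (differentiableOn_pow _).div (DifferentiableOn.fun_finsetProd fun q _ =>
    differentiableOn_id.sub_const _) fun z hz => prod_ne_zero_iff.2 fun q hq h => ?_
  exact hfar q (mem_filter.1 hq).2 (sub_eq_zero.1 h ▸ hz)

variable [DecidableEq ι]

theorem circleIntegral_pow_div_prod_sub_eq_residueSum {v : ι → ℂ} (hv : Injective v) {m : ℕ}
    (hm : m + 1 ≤ Fintype.card ι) {c : ℂ} {R : ℝ} (hR : 0 ≤ R) {s : Finset ι}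
    (hs : ∀ p, p ∈ s ↔ v p ∈ ball c R) (hsphere : ∀ p, v p ∉ sphere c R) :
    (∮ z in C(c, R), z ^ m / ∏ q, (z - v q)) = 2 * π * I * residueSum s m v := by
  have hne : ∀ z ∈ sphere c R, ∀ p, z - v p ≠ 0 :=
    fun z hz p h => hsphere p (sub_eq_zero.1 h ▸ hz)
  rw [circleIntegral.integral_congr hR fun z hz => pow_div_prod_sub_eq_sum hv hm
      fun p => sub_ne_zero.1 (hne z hz p),
    circleIntegral.integral_fun_sum
      (f := fun p z => (v p ^ m / ∏ q ∈ univ.erase p, (v p - v q)) * (z - v p)⁻¹)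
      fun p _ => ContinuousOn.circleIntegrable hR <| continuousOn_const.mul <|
        (continuousOn_id.sub continuousOn_const).inv₀ fun z hz => hne z hz p]
  simp only [circleIntegral.integral_const_mul, residueSum, mul_sum]
  rw [← sum_subset (subset_univ s) fun p _ hp => ?_]
  · refine sum_congr rfl fun p hp => ?_
    rw [circleIntegral.integral_sub_inv_of_mem_ball ((hs p).1 hp)]
    ring
  · rw [circleIntegral.integral_sub_inv_of_notMem_closedBall hR, mul_zero]
    rw [← ball_union_sphere]
    exact fun h => h.elim (fun h => hp ((hs p).2 h)) (hsphere p)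

theorem tendsto_residueSum_nhdsWithin_injective {A : ι → ℂ} {m : ℕ}
    (hm : m + 1 ≤ Fintype.card ι) {c : ℂ} {R : ℝ} (hR : 0 ≤ R) {s : Finset ι}
    (hs : ∀ p, p ∈ s ↔ A p ∈ ball c R) (hA : ∀ p, A p ∉ sphere c R) :
    Tendsto (residueSum s m) (𝓝[{v | Injective v}] A)
      (𝓝 ((2 * π * I)⁻¹ * ∮ z in C(c, R), z ^ m / ∏ q, (z - A q))) := by
  have hnear : ∀ᶠ v in 𝓝 A, ∀ p, (v p ∈ ball c R ↔ A p ∈ ball c R) ∧ v p ∉ sphere c R :=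
    eventually_all.2 fun p => (continuous_apply p).continuousAt.eventually
      (eventually_mem_ball_iff_and_notMem_sphere (hA p))
  refine (((continuousAt_circleIntegral_pow_div_prod_sub m hR hA).tendsto.const_mul _).mono_left
    nhdsWithin_le_nhds).congr' ?_
  filter_upwards [self_mem_nhdsWithin, nhdsWithin_le_nhds hnear] with v hv hvA
  rw [circleIntegral_pow_div_prod_sub_eq_residueSum hv hm hR
    (fun p => (hs p).trans (hvA p).1.symm) fun p => (hvA p).2, ← mul_assoc,
    inv_mul_cancel₀ two_pi_I_ne_zero, one_mul]

theorem exists_tendsto_residueSum_pos (w : ι → ℤ) {m : ℕ} (hm : m + 1 ≤ Fintype.card ι) :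
    ∃ L, Tendsto (residueSum {p | 0 < w p} m) (𝓝[{v | Injective v}] fun p => (w p : ℂ)) (𝓝 L) := by
  -- the positive weights lie in `ball (n + 1) (n + 1/2)`, all others outside its closure
  set n : ℤ := ∑ p, |w p|
  refine ⟨_, tendsto_residueSum_nhdsWithin_injective hm (c := ((n + 1 : ℤ) : ℂ)) (R := n + 2⁻¹)
    (by positivity) (fun p => ?_) fun p => intCast_notMem_sphere _ _ _⟩
  have := (le_abs_self (w p)).trans (single_le_sum (fun q _ => abs_nonneg (w q)) (mem_univ p))
  rw [intCast_mem_ball_iff, abs_le]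
  simp only [mem_filter, mem_univ, true_and]
  omega

theorem tendsto_residueSum_zero (w : ι → ℤ) {m : ℕ} (hm : m + 1 ≤ Fintype.card ι)
    (hzero : #{p | w p = 0} ≤ m) :
    Tendsto (residueSum {p | w p = 0} m) (𝓝[{v | Injective v}] fun p => (w p : ℂ)) (𝓝 0) := by
  have hs : ∀ p, p ∈ ({p | w p = 0} : Finset ι) ↔ (w p : ℂ) ∈ ball 0 2⁻¹ := fun p => by
    simpa using (intCast_mem_ball_iff (w p) 0 0).symm
  have hsphere : ∀ p, (w p : ℂ) ∉ sphere 0 2⁻¹ := fun p => by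
    simpa using intCast_notMem_sphere (w p) 0 0
  have hfar : ∀ q, (w q : ℂ) ≠ 0 → (w q : ℂ) ∉ closedBall 0 2⁻¹ := fun q hq hmem => by
    rw [← ball_union_sphere] at hmem
    exact hq (by simpa using (hs q).2 (hmem.resolve_right (hsphere q)))
  have h := tendsto_residueSum_nhdsWithin_injective hm (by norm_num) hs hsphere
  rwa [circleIntegral_pow_div_prod_sub_eq_zero (by norm_num) (by simpa using hzero) hfar,
    mul_zero] at h

theorem tendsto_residueSum_pos_of_neg_symm (w : ι → ℤ) (σ : ι ≃ ι) (hσ : ∀ p, w (σ p) = -w p)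
    {m : ℕ} (hm : m + 2 ≤ Fintype.card ι) (hpar : Odd (m + Fintype.card ι))
    (hzero : #{p | w p = 0} ≤ m) :
    Tendsto (residueSum {p | 0 < w p} m) (𝓝[{v | Injective v}] fun p => (w p : ℂ)) (𝓝 0) := by
  have := nhdsWithin_setOf_injective_neBot fun p => (w p : ℂ)
  obtain ⟨L, hP⟩ := exists_tendsto_residueSum_pos w (m := m) (by omega)
  have hsym := tendsto_neg_comp_nhdsWithin_injective σ (A := fun p => (w p : ℂ))
    fun p => by simp [hσ]
  have hL : L = -L - 0 := tendsto_nhds_unique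
    ((hP.comp hsym).congr' (eventually_nhdsWithin_of_forall (s := {v | Injective v})
      fun v hv => residueSum_pos_neg_comp w σ hσ hm hpar hv))
    (hP.neg.sub (tendsto_residueSum_zero w (by omega) hzero))
  rwa [show L = 0 by linear_combination hL / 2] at hP

theorem tendsto_residueSum_pos_of_neg_symm_real (w : ι → ℤ) (σ : ι ≃ ι)
    (hσ : ∀ p, w (σ p) = -w p) {m : ℕ} (hm : m + 2 ≤ Fintype.card ι)
    (hpar : Odd (m + Fintype.card ι)) (hzero : #{p | w p = 0} ≤ m) :
    Tendsto (residueSum {p | 0 < w p} m) (𝓝[{v | Injective v}] fun p => (w p : ℝ)) (𝓝 0) := by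
  have hcast : Tendsto (fun (b : ι → ℝ) p => (b p : ℂ)) (𝓝[{v | Injective v}] fun p => (w p : ℝ))
      (𝓝[{v | Injective v}] fun p => (w p : ℂ)) := by
    have := (continuous_pi fun p => continuous_ofReal.comp (continuous_apply p)).continuousWithinAt
      (s := {v : ι → ℝ | Injective v}) (x := fun p => (w p : ℝ)) |>.tendsto_nhdsWithin
      (t := {v : ι → ℂ | Injective v}) fun b hb => ofReal_injective.comp hb
    simpa using this
  rw [← tendsto_ofReal_iff, ofReal_zero]
  exact ((tendsto_residueSum_pos_of_neg_symm w σ hσ hm hpar hzero).comp hcast).congr fun b =>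
    (map_residueSum ofRealHom _ _ b).symm

end CircleIntegral

theorem Multiset.three_le_sum_of_ne {s : Multiset ℕ} (hs : ∀ x ∈ s, 1 ≤ x) (h0 : s ≠ 0)
    (h1 : s ≠ {1}) (h2 : s ≠ {2}) (h11 : s ≠ {1, 1}) : 3 ≤ s.sum := by
  by_contra! hlt
  have hcard : Multiset.card s ≤ 2 := by
    have := Multiset.card_nsmul_le_sum hs
    simp only [smul_eq_mul, mul_one] at this
    omega
  interval_cases h : Multiset.card s
  · exact h0 (Multiset.card_eq_zero.1 h)
  · obtain ⟨x, rfl⟩ := Multiset.card_eq_one.1 h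
    simp only [Multiset.mem_singleton, forall_eq, Multiset.sum_singleton] at hs hlt
    interval_cases x <;> simp_all
  · obtain ⟨x, y, rfl⟩ := Multiset.card_eq_two.1 h
    simp only [Multiset.insert_eq_cons, Multiset.mem_cons, Multiset.mem_singleton,
      forall_eq_or_imp, forall_eq, Multiset.sum_cons, Multiset.sum_singleton] at hs hlt
    obtain ⟨rfl, rfl⟩ : x = 1 ∧ y = 1 := by omega
    exact h11 rfl

theorem aVal_sigmaCongrRight_revPerm (r : ℕ) (d : Fin r → ℕ) (p : Σ k : Fin r, Fin (d k + 1)) :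
    aVal r d (Equiv.sigmaCongrRight (fun _ => Fin.revPerm) p) = -aVal r d p := by
  obtain ⟨k, i⟩ := p
  show 2 * ((i.rev : ℕ) : ℤ) - d k = -(2 * (i : ℕ) - d k)
  rw [Fin.val_rev]
  omega

theorem card_filter_aVal_eq_zero_le (r : ℕ) (d : Fin r → ℕ) : #{p | aVal r d p = 0} ≤ r := by
  refine (card_le_card_of_injOn Sigma.fst (fun _ _ => mem_univ _) ?_).trans_eq (card_fin r)
  rintro ⟨k, i⟩ hi ⟨k', j⟩ hj (rfl : k = k')
  have hi' : 2 * (i : ℤ) - d k = 0 := (mem_filter.1 hi).2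
  have hj' : 2 * (j : ℤ) - d k = 0 := (mem_filter.1 hj).2
  rw [Fin.ext (by omega : (i : ℕ) = j)]

/-- **Corollary 4.1 (vanishing of the degree `2 - D` coefficient, Eq. (4.6)).**
For `V = ⊕ₖ V_{d k}` with all `d k ≥ 1`, not isomorphic to `V₁`, `2V₁`, nor `V₂`,
`lim_{b_Θ → a_Θ} Σ_{(K,I)∈Λ} 2 b_{K,I}^{D-3} / ∏_{(k,i)∈Θ∖{(K,I)}} (b_{K,I} - b_{k,i}) = 0`,
the limit being over tuples with pairwise distinct entries. -/
theorem sl2_invariants_first_coeff_vanish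
    (r : ℕ) (d : Fin r → ℕ) (hd : ∀ k, 1 ≤ d k)
    (hneV1 : Multiset.map d Finset.univ.val ≠ ({1} : Multiset ℕ))
    (hneV2 : Multiset.map d Finset.univ.val ≠ ({2} : Multiset ℕ))
    (hne2V1 : Multiset.map d Finset.univ.val ≠ ({1, 1} : Multiset ℕ)) :
    Filter.Tendsto
      (fun b : (Σ k : Fin r, Fin (d k + 1)) → ℝ =>
        ∑ p : lamType r d,
          2 * b p.1 ^ ((r + ∑ k, d k) - 3) /
            ∏ q ∈ Finset.univ.erase p.1, (b p.1 - b q))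
      (nhdsWithin (fun p => ((aVal r d p : ℤ) : ℝ)) {b | Function.Injective b})
      (nhds 0) := by
  rcases Nat.eq_zero_or_pos r with rfl | hr
  · have : IsEmpty (lamType 0 d) := ⟨fun p => p.1.1.elim0⟩
    simpa using tendsto_const_nhds
  have hsum : 3 ≤ ∑ k, d k := Multiset.three_le_sum_of_ne (by simpa using hd)
    (by simpa using hr.ne') hneV1 hneV2 hne2V1
  have hcard : Fintype.card (Σ k : Fin r, Fin (d k + 1)) = r + ∑ k, d k := by
    simp [Fintype.card_sigma, sum_add_distrib, add_comm]
  have h := tendsto_residueSum_pos_of_neg_symm_real (aVal r d) _ (aVal_sigmaCongrRight_revPerm r d)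
    (m := r + ∑ k, d k - 3) (by omega) ⟨r + ∑ k, d k - 2, by omega⟩
    ((card_filter_aVal_eq_zero_le r d).trans (by omega))
  have h2 := h.const_mul 2
  rw [mul_zero] at h2
  refine h2.congr fun b => ?_
  rw [residueSum, mul_sum,
    sum_subtype (p := (0 < aVal r d ·)) (F := inferInstance) _ fun p => by simp]
  simp only [mul_div_assoc]

end
end

section
/- Let x, y ∈ ℂ be distinct and nonzero, let α, β be positive integers, and let t ∈ ℂ with tx ≠ 1 and ty ≠ 1. Then 1/((1 − tx)^α (1 − ty)^β) = Σ_{i=0}^{α−1} C(i+β−1, i) · (−y/x)^i / ( (1 − tx)^{α−i} · (1 − y/x)^{β+i} ) + Σ_{j=0}^{β−1} C(j+α−1, j) · (−x/y)^j / ( (1 − ty)^{β−j} · (1 − x/y)^{α+j} ), where C(·,·) denotes the binomial coefficient. -/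
open scoped BigOperators

noncomputable section

private lemma yy_aux (x y : ℂ) (hxy : x ≠ y) (hx0 : x ≠ 0) (hy0 : y ≠ 0)
    (t : ℂ) (htx : t * x ≠ 1) (hty : t * y ≠ 1) :
    ∀ β α : ℕ, 0 < α + β →
    1 / ((1 - t * x) ^ α * (1 - t * y) ^ β) =
      (∑ i ∈ Finset.range α,
        (Nat.choose (i + β - 1) i : ℂ) * (- y / x) ^ i /
          ((1 - t * x) ^ (α - i) * (1 - y / x) ^ (β + i))) +
      ∑ j ∈ Finset.range β,
        (Nat.choose (j + α - 1) j : ℂ) * (- x / y) ^ j /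
          ((1 - t * y) ^ (β - j) * (1 - x / y) ^ (α + j)) := by
  have hu : (1:ℂ) - t*x ≠ 0 := sub_ne_zero.2 fun h => htx h.symm
  have hv : (1:ℂ) - t*y ≠ 0 := sub_ne_zero.2 fun h => hty h.symm
  have hc : (1:ℂ) - y/x ≠ 0 := by
    rw [sub_ne_zero]
    intro h
    rw [eq_div_iff hx0, one_mul] at h
    exact hxy h
  have hd : (1:ℂ) - x/y ≠ 0 := by
    rw [sub_ne_zero]
    intro h
    rw [eq_div_iff hy0, one_mul] at h
    exact hxy h.symm
  have hc1 : 1/((1:ℂ)-y/x) = -(x/y)/(1-x/y) := by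
    rw [div_eq_div_iff hc hd]; field_simp; ring
  have hc2 : (y/x)/((1:ℂ)-y/x) = (-1)/(1-x/y) := by
    rw [div_eq_div_iff hc hd]; field_simp; ring
  have base1 : ∀ α : ℕ, 0 < α →
      (1:ℂ) / ((1 - t * x) ^ α * (1 - t * y) ^ 0) =
      ∑ i ∈ Finset.range α, (Nat.choose (i + 0 - 1) i : ℂ) * (- y / x) ^ i /
          ((1 - t * x) ^ (α - i) * (1 - y / x) ^ (0 + i)) := by
    intro α hα
    rw [Finset.sum_eq_single_of_mem 0 (Finset.mem_range.2 hα)]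
    · simp
    · intro b _ hb
      rw [show b + 0 - 1 = b - 1 by omega, Nat.choose_eq_zero_of_lt (by omega)]
      simp
  have base2 : ∀ β : ℕ, 0 < β →
      (1:ℂ) / ((1 - t * x) ^ 0 * (1 - t * y) ^ β) =
      ∑ j ∈ Finset.range β, (Nat.choose (j + 0 - 1) j : ℂ) * (- x / y) ^ j /
          ((1 - t * y) ^ (β - j) * (1 - x / y) ^ (0 + j)) := by
    intro β hβ
    rw [Finset.sum_eq_single_of_mem 0 (Finset.mem_range.2 hβ)]
    · simp
    · intro b _ hb
      rw [show b + 0 - 1 = b - 1 by omega, Nat.choose_eq_zero_of_lt (by omega)]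
      simp
  intro β
  induction β with
  | zero =>
    intro α hα
    rw [base1 α (by omega)]
    simp
  | succ β ihβ =>
    intro α
    induction α with
    | zero =>
      intro _
      rw [base2 (β+1) (by omega)]
      simp
    | succ α ihα =>
      intro _
      have hrec : 1/((1-t*x)^(α+1) * (1-t*y)^(β+1)) =
          (1/(1-y/x)) * (1/((1-t*x)^(α+1) * (1-t*y)^β))
          - (y/x/(1-y/x)) * (1/((1-t*x)^α * (1-t*y)^(β+1))) := by
        have hkey : ((1:ℂ) - t*y) - (y/x)*(1-t*x) = 1 - y/x := by field_simp; ring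
        have h1 : (1:ℂ)/((1-t*x)^(α+1) * (1-t*y)^β)
            = (1-t*y) / ((1-t*x)^(α+1) * (1-t*y)^(β+1)) := by
          conv_rhs => rw [pow_succ (1-t*y),
            show (1-t*x)^(α+1) * ((1-t*y)^β * (1-t*y))
              = (1-t*y) * ((1-t*x)^(α+1) * (1-t*y)^β) by ring,
            ← div_div, div_self hv]
        have h2 : (1:ℂ)/((1-t*x)^α * (1-t*y)^(β+1))
            = (1-t*x) / ((1-t*x)^(α+1) * (1-t*y)^(β+1)) := by
          conv_rhs => rw [pow_succ (1-t*x),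
            show (1-t*x)^α * (1-t*x) * (1-t*y)^(β+1)
              = (1-t*x) * ((1-t*x)^α * (1-t*y)^(β+1)) by ring,
            ← div_div, div_self hu]
        rw [h1, h2]
        rw [show (1:ℂ)/(1-y/x) * ((1-t*y)/((1-t*x)^(α+1) * (1-t*y)^(β+1)))
            - (y/x/(1-y/x)) * ((1-t*x)/((1-t*x)^(α+1) * (1-t*y)^(β+1)))
            = ((1-t*y) - (y/x)*(1-t*x))/(1-y/x) / ((1-t*x)^(α+1) * (1-t*y)^(β+1)) by ring,
          hkey, div_self hc]
      rw [hrec, ihβ (α+1) (by omega), ihα (by omega)]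
      simp only [Finset.sum_range_succ']
      have eF : (∑ k ∈ Finset.range α,
            ((k + 1 + (β + 1) - 1).choose (k + 1) : ℂ) * (-y / x) ^ (k + 1) /
              ((1 - t * x) ^ (α + 1 - (k + 1)) * (1 - y / x) ^ (β + 1 + (k + 1))))
          = 1/(1-y/x) * ∑ k ∈ Finset.range α,
              ((k + 1 + β - 1).choose (k + 1) : ℂ) * (-y / x) ^ (k + 1) /
                ((1 - t * x) ^ (α + 1 - (k + 1)) * (1 - y / x) ^ (β + (k + 1)))
            - y/x/(1-y/x) * ∑ i ∈ Finset.range α,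
              ((i + (β + 1) - 1).choose i : ℂ) * (-y / x) ^ i /
                ((1 - t * x) ^ (α - i) * (1 - y / x) ^ (β + 1 + i)) := by
        rw [Finset.mul_sum, Finset.mul_sum, ← Finset.sum_sub_distrib]
        refine Finset.sum_congr rfl fun i _ => ?_
        rw [show i+1+(β+1)-1 = (i+β)+1 by omega, show i+1+β-1 = i+β by omega,
          show i+(β+1)-1 = i+β by omega, Nat.succ_sub_succ, Nat.choose_succ_succ (i+β) i,
          show β+1+(i+1) = (β+(i+1))+1 by omega, show β+1+i = β+(i+1) by omega,
          pow_succ (1-y/x) (β+(i+1))]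
        push_cast
        simp only [div_eq_mul_inv, mul_inv]
        ring
      have eG : (∑ k ∈ Finset.range β,
            ((k + 1 + (α + 1) - 1).choose (k + 1) : ℂ) * (-x / y) ^ (k + 1) /
              ((1 - t * y) ^ (β + 1 - (k + 1)) * (1 - x / y) ^ (α + 1 + (k + 1))))
          = 1/(1-y/x) * ∑ j ∈ Finset.range β,
              ((j + (α + 1) - 1).choose j : ℂ) * (-x / y) ^ j /
                ((1 - t * y) ^ (β - j) * (1 - x / y) ^ (α + 1 + j))
            - y/x/(1-y/x) * ∑ k ∈ Finset.range β,
              ((k + 1 + α - 1).choose (k + 1) : ℂ) * (-x / y) ^ (k + 1) /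
                ((1 - t * y) ^ (β + 1 - (k + 1)) * (1 - x / y) ^ (α + (k + 1))) := by
        rw [Finset.mul_sum, Finset.mul_sum, ← Finset.sum_sub_distrib]
        refine Finset.sum_congr rfl fun j _ => ?_
        rw [hc1, hc2, show j+1+(α+1)-1 = (j+α)+1 by omega, show j+(α+1)-1 = j+α by omega,
          show j+1+α-1 = j+α by omega, Nat.succ_sub_succ, Nat.choose_succ_succ (j+α) j,
          show α+1+(j+1) = (α+(j+1))+1 by omega, show α+1+j = α+(j+1) by omega,
          pow_succ (1-x/y) (α+(j+1))]
        push_cast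
        simp only [div_eq_mul_inv, mul_inv]
        ring
      have eF0 : ((0 + (β + 1) - 1).choose 0 : ℂ) * (-y / x) ^ 0 /
            ((1 - t * x) ^ (α + 1 - 0) * (1 - y / x) ^ (β + 1 + 0))
          = 1/(1-y/x) * (((0 + β - 1).choose 0 : ℂ) * (-y / x) ^ 0 /
            ((1 - t * x) ^ (α + 1 - 0) * (1 - y / x) ^ (β + 0))) := by
        simp only [Nat.choose_zero_right, Nat.cast_one, pow_zero, one_mul, Nat.sub_zero,
          add_zero]
        rw [pow_succ (1-y/x) β]
        simp only [div_eq_mul_inv, mul_inv]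
        ring
      have eG0 : ((0 + (α + 1) - 1).choose 0 : ℂ) * (-x / y) ^ 0 /
            ((1 - t * y) ^ (β + 1 - 0) * (1 - x / y) ^ (α + 1 + 0))
          = -(y/x/(1-y/x)) * (((0 + α - 1).choose 0 : ℂ) * (-x / y) ^ 0 /
            ((1 - t * y) ^ (β + 1 - 0) * (1 - x / y) ^ (α + 0))) := by
        rw [hc2]
        simp only [Nat.choose_zero_right, Nat.cast_one, pow_zero, one_mul, Nat.sub_zero,
          add_zero]
        rw [pow_succ (1-x/y) α]
        simp only [div_eq_mul_inv, mul_inv]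
        ring
      rw [eF, eG, eF0, eG0]
      ring

/-- **Corollary 6.3 (the Yin-Yang formula).** For distinct nonzero `x, y ∈ ℂ`, positive
integers `α, β`, and `t ∈ ℂ` with `t x ≠ 1` and `t y ≠ 1`,
`1/((1 - tx)^α (1 - ty)^β)
  = Σ_{i=0}^{α-1} C(i+β-1, i) (-y/x)^i / ((1 - tx)^{α-i} (1 - y/x)^{β+i})
  + Σ_{j=0}^{β-1} C(j+α-1, j) (-x/y)^j / ((1 - ty)^{β-j} (1 - x/y)^{α+j})`. -/
theorem yin_yang_formula
    (x y : ℂ) (hxy : x ≠ y) (hx0 : x ≠ 0) (hy0 : y ≠ 0)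
    (α β : ℕ) (hα : 0 < α) (hβ : 0 < β)
    (t : ℂ) (htx : t * x ≠ 1) (hty : t * y ≠ 1) :
    1 / ((1 - t * x) ^ α * (1 - t * y) ^ β) =
      (∑ i ∈ Finset.range α,
        (Nat.choose (i + β - 1) i : ℂ) * (- y / x) ^ i /
          ((1 - t * x) ^ (α - i) * (1 - y / x) ^ (β + i))) +
      ∑ j ∈ Finset.range β,
        (Nat.choose (j + α - 1) j : ℂ) * (- x / y) ^ j /
          ((1 - t * y) ^ (β - j) * (1 - x / y) ^ (α + j)) := by
  exact yy_aux x y hxy hx0 hy0 t htx hty β α (by omega)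

end
end

section
/- Let F(z) = Σ_{i=0}^∞ F_i z^i be a power series with complex coefficients that converges on the closed unit disk (e.g. F is analytic on a neighborhood of the closed unit disk), let a and m be positive integers, and let t ∈ ℂ with |t| < 1. Then (1/(2π√−1)) ∮_{|z|=1} F(z)·(1 − t z^{−a})^{−m} · dz/z = Σ_{i=0}^∞ C(m−1+i, m−1) F_{ia} t^i = (1/(m−1)!) · (D_{m−1}(U_a F))(t), where C(·,·) is the binomial coefficient, U_a F is the power series (U_a F)(t) = Σ_{i=0}^∞ F_{ia} t^i, and D_n is the operator taking a function G to the n-th derivative of t^n·G(t). -/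
/-!
On `|z| = 1` we have `|t z^{-a}| = |t| < 1`, so
`(1 - t z^{-a})^{-(n+1)} = Σ_j C(j+n, n) t^j z^{-aj}`, and multiplying by the absolutely
convergent `Σ_i F_i z^i` turns the integrand into the Laurent series
`Σ_{i,j} F_i C(j+n, n) t^j z^{i-aj-1}`, whose terms are bounded on the circle by a summable
family. Integrating termwise, only the terms with `i = aj` survive, each with weight `2πi`.

For the second identity, `s^n Σ_i F_{ia} s^i = Σ_i F_{ia} s^{i+n}` has bounded coefficients, so
it can be differentiated `n` times termwise in the open unit disk, and
`dⁿ/dsⁿ s^{i+n} = n! C(n+i, n) s^i`.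
-/

open Metric Real Complex Topology

section PowerSeries

variable {c : ℕ → ℂ} {C : ℝ}

theorem summable_descFactorial_mul_pow_sub {r : ℝ} (hr : ‖r‖ < 1) (n : ℕ) :
    Summable fun m : ℕ => (m.descFactorial n : ℝ) * r ^ (m - n) :=
  (summable_nat_add_iff n).mp <| by
    simpa using summable_descFactorial_mul_geometric_of_norm_lt_one n hr

theorem summable_descFactorial_mul_norm_mul_pow (hc : ∀ i, ‖c i‖ ≤ C) (k n : ℕ) {r : ℝ}
    (hr0 : 0 ≤ r) (hr1 : r < 1) :
    Summable fun i : ℕ => ((i + k).descFactorial n : ℝ) * ‖c i‖ * r ^ (i + k - n) := by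
  have hr : ‖r‖ < 1 := by rwa [Real.norm_of_nonneg hr0]
  refine (((summable_nat_add_iff k).mpr (summable_descFactorial_mul_pow_sub hr n)).mul_left C
    ).of_nonneg_of_le (fun i => by positivity) fun i => ?_
  rw [mul_right_comm, mul_comm C]
  gcongr
  exact hc i

theorem hasDerivAt_tsum_descFactorial_mul_pow (hc : ∀ i, ‖c i‖ ≤ C) (k n : ℕ) {t : ℂ}
    (ht : ‖t‖ < 1) :
    HasDerivAt (fun s => ∑' i : ℕ, ((i + k).descFactorial n : ℂ) * c i * s ^ (i + k - n))
      (∑' i : ℕ, ((i + k).descFactorial (n + 1) : ℂ) * c i * t ^ (i + k - (n + 1))) t := by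
  obtain ⟨r, htr, hr1⟩ := exists_between ht
  replace htr : t ∈ ball (0 : ℂ) r := mem_ball_zero_iff.2 htr
  refine hasDerivAt_tsum_of_isPreconnected
    (g := fun i s => ((i + k).descFactorial n : ℂ) * c i * s ^ (i + k - n))
    (g' := fun i s => ((i + k).descFactorial (n + 1) : ℂ) * c i * s ^ (i + k - (n + 1)))
    (summable_descFactorial_mul_norm_mul_pow hc k (n + 1) (dist_nonneg.trans htr.le) hr1)
    isOpen_ball (convex_ball 0 r).isPreconnected (fun i y _ => ?_) (fun i y hy => ?_) htr ?_ htr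
  · refine ((hasDerivAt_pow (i + k - n) y).const_mul _).congr_deriv ?_
    rw [Nat.descFactorial_succ, Nat.sub_sub]
    push_cast
    ring
  · have hy : ‖y‖ ≤ r := (mem_ball_zero_iff.1 hy).le
    rw [norm_mul, norm_mul, norm_pow, Complex.norm_natCast]
    gcongr
  · refine .of_norm <|
      (summable_descFactorial_mul_norm_mul_pow hc k n (norm_nonneg t) ht).congr fun i => ?_
    rw [norm_mul, norm_mul, norm_pow, Complex.norm_natCast]

theorem iteratedDeriv_tsum_mul_pow (hc : ∀ i, ‖c i‖ ≤ C) (k n : ℕ) {t : ℂ} (ht : ‖t‖ < 1) :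
    iteratedDeriv n (fun s => ∑' i : ℕ, c i * s ^ (i + k)) t =
      ∑' i : ℕ, ((i + k).descFactorial n : ℂ) * c i * t ^ (i + k - n) := by
  induction n generalizing t with
  | zero => simp
  | succ n ih =>
    have hnhds : iteratedDeriv n (fun s => ∑' i : ℕ, c i * s ^ (i + k)) =ᶠ[𝓝 t]
        fun s => ∑' i : ℕ, ((i + k).descFactorial n : ℂ) * c i * s ^ (i + k - n) := by
      filter_upwards [isOpen_ball.mem_nhds (mem_ball_zero_iff.2 ht)] with s hs
      exact ih (mem_ball_zero_iff.1 hs)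
    rw [iteratedDeriv_succ, hnhds.deriv_eq]
    exact (hasDerivAt_tsum_descFactorial_mul_pow hc k n ht).deriv

theorem tsum_choose_mul_pow_eq_iteratedDeriv (hc : ∀ i, ‖c i‖ ≤ C) (n : ℕ) {t : ℂ}
    (ht : ‖t‖ < 1) :
    ∑' i : ℕ, ((n + i).choose n : ℂ) * c i * t ^ i =
      (n.factorial : ℂ)⁻¹ * iteratedDeriv n (fun s => s ^ n * ∑' i : ℕ, c i * s ^ i) t := by
  have hshift : (fun s : ℂ => s ^ n * ∑' i : ℕ, c i * s ^ i) =
      fun s => ∑' i : ℕ, c i * s ^ (i + n) := by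
    funext s
    rw [← tsum_mul_left]
    exact tsum_congr fun i => by ring
  rw [hshift, iteratedDeriv_tsum_mul_pow hc n n ht,
    eq_inv_mul_iff_mul_eq₀ (by exact_mod_cast n.factorial_ne_zero), ← tsum_mul_left]
  refine tsum_congr fun i => ?_
  rw [Nat.add_sub_cancel, add_comm i n, Nat.descFactorial_eq_factorial_mul_choose]
  push_cast
  ring

end PowerSeries

theorem circleIntegral_sub_center_zpow (c : ℂ) {R : ℝ} (hR : R ≠ 0) (k : ℤ) :
    (∮ z in C(c, R), (z - c) ^ k) = if k = -1 then 2 * π * I else 0 := by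
  split_ifs with hk
  · simpa [hk] using circleIntegral.integral_sub_center_inv c hR
  · exact circleIntegral.integral_sub_zpow_of_ne hk c c R

theorem hasSum_circleIntegral_of_norm_le {ι E : Type*} [Countable ι] [NormedAddCommGroup E]
    [NormedSpace ℂ E] {f : ι → ℂ → E} {g : ℂ → E} {u : ι → ℝ} {c : ℂ} {R : ℝ}
    (hf : ∀ i, CircleIntegrable (f i) c R) (hfu : ∀ i, ∀ z ∈ sphere c |R|, ‖f i z‖ ≤ u i)
    (hu : Summable u) (hfg : ∀ z ∈ sphere c |R|, HasSum (f · z) (g z)) :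
    HasSum (fun i => ∮ z in C(c, R), f i z) (∮ z in C(c, R), g z) := by
  refine intervalIntegral.hasSum_integral_of_dominated_convergence (fun i _ => |R| * u i)
    (fun i => ?_) (fun i => ?_) (.of_forall fun _ _ => hu.mul_left |R|) intervalIntegrable_const
    (.of_forall fun θ _ => (hfg _ (circleMap_mem_sphere' c R θ)).const_smul _)
  · simp only [deriv_circleMap]
    exact (by fun_prop : Continuous _).aestronglyMeasurable.smul (hf i).def'.1
  · refine .of_forall fun θ _ => ?_
    rw [deriv_circleMap, norm_smul, norm_mul, norm_circleMap_zero, Complex.norm_I, mul_one]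
    gcongr
    exact hfu i _ (circleMap_mem_sphere' c R θ)

section LaurentExpansion

variable {F : ℕ → ℂ} {t : ℂ}

theorem hasSum_tsum_mul_pow_div_one_sub_pow (hF : Summable fun i => ‖F i‖) (a n : ℕ)
    (ht : ‖t‖ < 1) {z : ℂ} (hz : ‖z‖ = 1) :
    HasSum (fun p : ℕ × ℕ => F p.1 * (((p.2 + n).choose n : ℂ) * t ^ p.2) *
        z ^ ((p.1 : ℤ) - a * p.2 - 1))
      ((∑' i, F i * z ^ i) / ((1 - t * z ^ (-(a : ℤ))) ^ (n + 1) * z)) := by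
  have hz0 : z ≠ 0 := norm_ne_zero_iff.1 (by rw [hz]; exact one_ne_zero)
  set w := t * z ^ (-(a : ℤ))
  have hw : ‖w‖ < 1 := by simpa [w, norm_zpow, hz] using ht
  have hFz : Summable fun i => ‖F i * z ^ i‖ := by simpa [hz] using hF
  have hgeom : Summable fun j : ℕ => ‖((j + n).choose n : ℂ) * w ^ j‖ := by
    simpa using summable_choose_mul_geometric_of_norm_lt_one n (r := ‖w‖) (by simpa using hw)
  have h1 : HasSum (fun i => F i * z ^ i) (∑' i, F i * z ^ i) := hFz.of_norm.hasSum
  have h2 : HasSum (fun j : ℕ => ((j + n).choose n : ℂ) * w ^ j) (1 / (1 - w) ^ (n + 1)) :=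
    hasSum_choose_mul_geometric_of_norm_lt_one n hw
  have hval : (∑' i, F i * z ^ i) / ((1 - w) ^ (n + 1) * z) =
      (∑' i, F i * z ^ i) * (1 / (1 - w) ^ (n + 1)) * z⁻¹ := by
    field_simp
  rw [hval]
  refine ((h1.mul h2 (summable_mul_of_summable_norm (f := fun i => F i * z ^ i)
    (g := fun j : ℕ => ((j + n).choose n : ℂ) * w ^ j) hFz hgeom)).mul_right z⁻¹).congr_fun
    fun p => ?_
  have hexp : z ^ ((p.1 : ℤ) - a * p.2 - 1) = z ^ p.1 * (z ^ (-(a : ℤ))) ^ p.2 * z⁻¹ := by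
    rw [zpow_sub₀ hz0, zpow_sub₀ hz0, zpow_one, zpow_natCast, ← zpow_natCast (z ^ _),
      ← zpow_mul, neg_mul, zpow_neg, div_eq_mul_inv, div_eq_mul_inv]
  rw [hexp, mul_pow]
  ring

theorem circleIntegral_tsum_mul_pow_div_one_sub_pow (hF : Summable fun i => ‖F i‖) (a n : ℕ)
    (ht : ‖t‖ < 1) :
    (∮ z in C(0, 1), (∑' i, F i * z ^ i) / ((1 - t * z ^ (-(a : ℤ))) ^ (n + 1) * z)) =
      2 * π * I * ∑' j : ℕ, ((n + j).choose n : ℂ) * F (j * a) * t ^ j := by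
  set coef : ℕ × ℕ → ℂ := fun p => F p.1 * (((p.2 + n).choose n : ℂ) * t ^ p.2)
  have hgeom : Summable fun j : ℕ => ‖((j + n).choose n : ℂ) * t ^ j‖ := by
    simpa using summable_choose_mul_geometric_of_norm_lt_one n (r := ‖t‖) (by simpa using ht)
  have hsum : HasSum (fun p : ℕ × ℕ => ∮ z in C(0, 1), coef p * z ^ ((p.1 : ℤ) - a * p.2 - 1))
      (∮ z in C(0, 1), (∑' i, F i * z ^ i) / ((1 - t * z ^ (-(a : ℤ))) ^ (n + 1) * z)) := by
    refine hasSum_circleIntegral_of_norm_le (u := fun p => ‖coef p‖) (fun p => ?_)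
      (fun p z hz => ?_)
      (Summable.mul_norm (f := F) (g := fun j : ℕ => ((j + n).choose n : ℂ) * t ^ j) hF hgeom)
      fun z hz => ?_
    · exact ContinuousOn.circleIntegrable zero_le_one <| continuousOn_const.mul <|
        continuousOn_id.zpow₀ _ fun z hz => Or.inl (ne_zero_of_mem_sphere one_ne_zero ⟨z, hz⟩)
    · rw [abs_one, mem_sphere_zero_iff_norm] at hz
      rw [norm_mul, norm_zpow, hz, one_zpow, mul_one]
    · rw [abs_one, mem_sphere_zero_iff_norm] at hz
      exact hasSum_tsum_mul_pow_div_one_sub_pow hF a n ht hz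
  have hterm (p : ℕ × ℕ) : (∮ z in C(0, 1), coef p * z ^ ((p.1 : ℤ) - a * p.2 - 1)) =
      if p.1 = p.2 * a then 2 * π * I * coef p else 0 := by
    have hk : (p.1 : ℤ) - a * p.2 - 1 = -1 ↔ p.1 = p.2 * a := by
      zify
      constructor <;> intro h <;> linarith
    have := circleIntegral_sub_center_zpow 0 one_ne_zero ((p.1 : ℤ) - a * p.2 - 1)
    simp only [sub_zero, hk] at this
    rw [circleIntegral.integral_const_mul, this]
    split_ifs
    · ring
    · exact mul_zero _
  have hinj : Function.Injective fun j : ℕ => (j * a, j) := fun _ _ h => (Prod.ext_iff.1 h).2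
  have hdiag :=
    (hinj.hasSum_iff (f := fun p => if p.1 = p.2 * a then 2 * π * I * coef p else 0) ?_).2
      (hsum.congr_fun fun p => (hterm p).symm)
  · simp only [Function.comp_def, if_true] at hdiag
    rw [← hdiag.tsum_eq, ← tsum_mul_left]
    exact tsum_congr fun j => by simp only [coef, add_comm n j]; ring
  · rintro ⟨i, j⟩ hp
    exact if_neg fun h => hp ⟨j, Prod.ext h.symm rfl⟩

end LaurentExpansion

theorem circle_integral_Ua_formula_general
    (F : ℕ → ℂ) (hF : ∀ z : ℂ, ‖z‖ ≤ 1 → Summable fun i : ℕ => F i * z ^ i)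
    (a m : ℕ) (hm : 0 < m) (t : ℂ) (ht : ‖t‖ < 1) :
    (2 * (Real.pi : ℂ) * Complex.I)⁻¹ *
        (∮ z in C(0, 1), (∑' i : ℕ, F i * z ^ i) / ((1 - t * z ^ (-(a : ℤ))) ^ m * z)) =
      (∑' i : ℕ, (Nat.choose (m - 1 + i) (m - 1) : ℂ) * F (i * a) * t ^ i) ∧
    (∑' i : ℕ, (Nat.choose (m - 1 + i) (m - 1) : ℂ) * F (i * a) * t ^ i) =
      ((m - 1).factorial : ℂ)⁻¹ *
        iteratedDeriv (m - 1) (fun s : ℂ => s ^ (m - 1) * ∑' i : ℕ, F (i * a) * s ^ i) t := by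
  obtain ⟨n, rfl⟩ : ∃ n, m = n + 1 := ⟨m - 1, by omega⟩
  rw [Nat.add_sub_cancel]
  have hFnorm : Summable fun i => ‖F i‖ := summable_norm_iff.2 (by simpa using hF 1 (by simp))
  refine ⟨?_, tsum_choose_mul_pow_eq_iteratedDeriv
    (fun i => hFnorm.le_tsum (i * a) fun j _ => norm_nonneg _) n ht⟩
  rw [circleIntegral_tsum_mul_pow_div_one_sub_pow hFnorm a n ht,
    inv_mul_cancel_left₀ two_pi_I_ne_zero]

/-- **Proposition 6.4.** Let `F(z) = Σᵢ Fᵢ zⁱ` converge on the closed unit disk, let `a, m` be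
positive integers, and `|t| < 1`.  Then
`(1/(2πi)) ∮_{|z|=1} F(z)(1 - t z^{-a})^{-m} dz/z = Σᵢ C(m-1+i, m-1) F_{i a} tⁱ
  = (1/(m-1)!) (D_{m-1}(U_a F))(t)`,
where `(U_a F)(s) = Σᵢ F_{i a} sⁱ` and `D_n G = dⁿ/dsⁿ (sⁿ G(s))`. -/
theorem circle_integral_Ua_formula
    (F : ℕ → ℂ) (hF : ∀ z : ℂ, ‖z‖ ≤ 1 → Summable fun i : ℕ => F i * z ^ i)
    (a m : ℕ) (ha : 0 < a) (hm : 0 < m) (t : ℂ) (ht : ‖t‖ < 1) :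
    (2 * (Real.pi : ℂ) * Complex.I)⁻¹ *
        (∮ z in C(0, 1), (∑' i : ℕ, F i * z ^ i) / ((1 - t * z ^ (-(a : ℤ))) ^ m * z)) =
      (∑' i : ℕ, (Nat.choose (m - 1 + i) (m - 1) : ℂ) * F (i * a) * t ^ i) ∧
    (∑' i : ℕ, (Nat.choose (m - 1 + i) (m - 1) : ℂ) * F (i * a) * t ^ i) =
      ((m - 1).factorial : ℂ)⁻¹ *
        iteratedDeriv (m - 1) (fun s : ℂ => s ^ (m - 1) * ∑' i : ℕ, F (i * a) * s ^ i) t :=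
  circle_integral_Ua_formula_general F hF a m hm t ht
end
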